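/- Let V_{ij} and Ŝ_{ij} be matrices indexed by (i,j) with i,j ≤ N, where Ŝ_{ij} equals S_{ij} when ‖S_{ij}‖ > λ_{ij} and equals 0 otherwise (hard thresholding). Suppose ‖S_{ij} - V_{ij}‖ ≤ λ_{ij}/2 for all (i,j), λ_{ij} ≤ C₀ ω for all (i,j) with ω > 0, and fix q ∈ [0,1). Then (1/N) ∑_{i,j} ‖V_{ij} - Ŝ_{ij}‖ ≤ C ω^{1-q} · (1/N) ∑_{i,j} ‖V_{ij}‖^q for a constant C depending only on C₀ and q. -/
import Mathlib


/-- Deterministic core of the consistency proof (Theorem 2.1): for the hard-thresholding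
estimator `Ŝ_{ij} = S_{ij} 1{‖S_{ij}‖ > λ_{ij}}`, if `‖S_{ij} - V_{ij}‖ ≤ λ_{ij}/2` and
`λ_{ij} ≤ C₀ ω` for all `(i,j)`, then
`(1/N) ∑_{i,j} ‖V_{ij} - Ŝ_{ij}‖ ≤ C ω^{1-q} (1/N) ∑_{i,j} ‖V_{ij}‖^q`
for a constant `C > 0` depending only on `C₀` and `q`. -/
theorem hard_threshold_total_error_bound
    {E : Type*} [NormedAddCommGroup E]
    (C₀ : ℝ) (hC₀ : 0 < C₀) (q : ℝ) (hq0 : 0 ≤ q) (hq1 : q < 1) :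
    ∃ C > 0, ∀ (N : ℕ), 0 < N →
      ∀ (V S Shat : Fin N × Fin N → E) (lam : Fin N × Fin N → ℝ) (ω : ℝ), 0 < ω →
      (∀ p, Shat p = if lam p < ‖S p‖ then S p else 0) →
      (∀ p, 0 < lam p) →
      (∀ p, ‖S p - V p‖ ≤ lam p / 2) →
      (∀ p, lam p ≤ C₀ * ω) →
      (N : ℝ)⁻¹ * ∑ p : Fin N × Fin N, ‖V p - Shat p‖ ≤
        C * ω ^ (1 - q) * ((N : ℝ)⁻¹ * ∑ p : Fin N × Fin N, ‖V p‖ ^ q) := by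
  refine ⟨(3 / 2 * C₀) ^ (1 - q), Real.rpow_pos_of_pos (by linarith) _, ?_⟩
  intro N hN V S Shat lam ω hω hShat hlam hSV hlamω
  have h1q : (0:ℝ) ≤ 1 - q := by linarith
  have hM : (0:ℝ) < 3 / 2 * C₀ * ω := by positivity
  -- pointwise bound
  have key : ∀ p, ‖V p - Shat p‖ ≤ (3 / 2 * C₀) ^ (1 - q) * ω ^ (1 - q) * ‖V p‖ ^ q := by
    intro p
    have hCω : (3 / 2 * C₀) ^ (1 - q) * ω ^ (1 - q) = (3 / 2 * C₀ * ω) ^ (1 - q) :=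
      (Real.mul_rpow (by linarith) hω.le).symm
    rw [hCω, hShat p]
    by_cases h : lam p < ‖S p‖
    · -- retained
      simp only [if_pos h]
      have hVlb : lam p / 2 < ‖V p‖ := by
        have := norm_sub_norm_le (S p) (V p)
        have := hSV p
        linarith
      have hl2 : (0:ℝ) < lam p / 2 := by have := hlam p; linarith
      have e1 : lam p / 2 = (lam p / 2) ^ (1 - q) * (lam p / 2) ^ q := by
        rw [← Real.rpow_add hl2]
        simp
      have b1 : (lam p / 2) ^ (1 - q) ≤ (3 / 2 * C₀ * ω) ^ (1 - q) := by
        apply Real.rpow_le_rpow hl2.le _ h1q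
        have := hlamω p
        linarith
      have b2 : (lam p / 2) ^ q ≤ ‖V p‖ ^ q :=
        Real.rpow_le_rpow hl2.le hVlb.le hq0
      calc ‖V p - S p‖ = ‖S p - V p‖ := norm_sub_rev _ _
        _ ≤ lam p / 2 := hSV p
        _ = (lam p / 2) ^ (1 - q) * (lam p / 2) ^ q := e1
        _ ≤ (3 / 2 * C₀ * ω) ^ (1 - q) * ‖V p‖ ^ q := by
            apply mul_le_mul b1 b2 (Real.rpow_nonneg hl2.le _) (Real.rpow_nonneg hM.le _)
    · -- thresholded
      simp only [if_neg h, sub_zero]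
      push_neg at h
      have hVub : ‖V p‖ ≤ 3 / 2 * C₀ * ω := by
        have h2 : ‖V p‖ ≤ ‖S p‖ + ‖S p - V p‖ := by
          have := norm_sub_norm_le (V p) (S p)
          have : ‖V p‖ - ‖S p‖ ≤ ‖V p - S p‖ := by
            have := norm_sub_norm_le (V p) (S p); linarith
          rw [norm_sub_rev] at this
          linarith
        have := hSV p
        have := hlamω p
        linarith
      rcases eq_or_lt_of_le (norm_nonneg (V p)) with h0 | h0
      · rw [← h0]
        positivity
      · have e1 : ‖V p‖ = ‖V p‖ ^ (1 - q) * ‖V p‖ ^ q := by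
          rw [← Real.rpow_add h0]; simp
        calc ‖V p‖ = ‖V p‖ ^ (1 - q) * ‖V p‖ ^ q := e1
          _ ≤ (3 / 2 * C₀ * ω) ^ (1 - q) * ‖V p‖ ^ q := by
              apply mul_le_mul_of_nonneg_right
                (Real.rpow_le_rpow h0.le hVub h1q) (Real.rpow_nonneg h0.le _)
  have hsum : ∑ p : Fin N × Fin N, ‖V p - Shat p‖ ≤
      ∑ p : Fin N × Fin N, (3 / 2 * C₀) ^ (1 - q) * ω ^ (1 - q) * ‖V p‖ ^ q :=
    Finset.sum_le_sum fun p _ => key p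
  have hNinv : (0:ℝ) ≤ (N : ℝ)⁻¹ := by positivity
  calc (N : ℝ)⁻¹ * ∑ p : Fin N × Fin N, ‖V p - Shat p‖
      ≤ (N : ℝ)⁻¹ * ∑ p : Fin N × Fin N, (3 / 2 * C₀) ^ (1 - q) * ω ^ (1 - q) * ‖V p‖ ^ q :=
        mul_le_mul_of_nonneg_left hsum hNinv
    _ = (3 / 2 * C₀) ^ (1 - q) * ω ^ (1 - q) * ((N : ℝ)⁻¹ * ∑ p : Fin N × Fin N, ‖V p‖ ^ q) := by
        rw [← Finset.mul_sum]; ring
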